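/- Let T be a contraction on a Hilbert space H. The Schäffer operator U_T on ℓ²_ℤ(H) defined block-wise by U_T(0,0) = T, U_T(-1,0) = D_T, U_T(-1,1) = -T*, U_T(0,1) = D_{T*}, U_T(j, j+1) = I for j ≠ 0, -1, and 0 elsewhere, is a unitary operator, and P_H U_T^n|_H = T^n for all n ≥ 0. -/

import Mathlib

/-!
`U_T` is the backward shift composed with the Julia operator `[[D_T, -T*], [T, D_{T*}]]` acting
on the coordinates `0, 1`. The Julia operator is unitary thanks to the defect identities
`D_T² = 1 - T*T`, `D_{T*}² = 1 - TT*` and the intertwining `T D_T = D_{T*} T`; the latter comes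
from `T (1 - T*T) = (1 - TT*) T` by approximating `√` uniformly by polynomials on the spectra.
So `U_T` preserves inner products, and its range is closed and contains every basis vector
`lp.single 2 j h`, hence `U_T` is unitary. Finally, vectors vanishing at all positive coordinates
keep this property under `U_T`, and for them the `0`-th coordinate of `U_T x` is `T x₀`.
-/

open Polynomial Filter
open scoped InnerProductSpace
open ContinuousLinearMap (adjoint)

theorem SemiconjBy.aeval {R A : Type*} [CommSemiring R] [Semiring A] [Algebra R A]
    {t a b : A} (h : SemiconjBy t a b) (p : R[X]) :
    SemiconjBy t (aeval a p) (aeval b p) := by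
  induction p using Polynomial.induction_on' with
  | add p q hp hq => simpa only [map_add] using hp.add_right hq
  | monomial n r =>
    simpa only [aeval_monomial] using
      SemiconjBy.mul_right (Algebra.commute_algebraMap_right r t) (h.pow_right n)

theorem exists_polynomial_tendstoUniformlyOn {s : Set ℝ} (hs : IsCompact s) {f : ℝ → ℝ}
    (hf : Continuous f) :
    ∃ p : ℕ → ℝ[X], TendstoUniformlyOn (fun n x => (p n).eval x) f atTop s := by
  obtain ⟨r, hr⟩ := hs.isBounded.subset_closedBall 0
  rw [Real.closedBall_eq_Icc] at hr
  choose p hp using fun n : ℕ => exists_polynomial_near_of_continuousOn (0 - r) (0 + r) f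
    hf.continuousOn (1 / (n + 1)) Nat.one_div_pos_of_nat
  refine ⟨p, (Metric.tendstoUniformlyOn_iff.2 fun ε hε => ?_).mono hr⟩
  filter_upwards [tendsto_one_div_add_atTop_nhds_zero_nat.eventually (gt_mem_nhds hε)]
    with n hn x hx
  rw [dist_comm, Real.dist_eq]
  exact (hp n x hx).trans hn

theorem SemiconjBy.cfc_real {A : Type*} [Ring A] [StarRing A] [Algebra ℝ A] [TopologicalSpace A]
    [T2Space A] [ContinuousMul A] [ContinuousFunctionalCalculus ℝ A IsSelfAdjoint] {t a b : A}
    (h : SemiconjBy t a b) (ha : IsSelfAdjoint a) (hb : IsSelfAdjoint b) {f : ℝ → ℝ}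
    (hf : Continuous f) : SemiconjBy t (cfc f a) (cfc f b) := by
  obtain ⟨p, hp⟩ := exists_polynomial_tendstoUniformlyOn
    ((ContinuousFunctionalCalculus.isCompact_spectrum a).union
      (ContinuousFunctionalCalculus.isCompact_spectrum b)) hf
  have hpa := (tendsto_cfc_fun (hp.mono Set.subset_union_left)
    (.of_forall fun n => (p n).continuous.continuousOn)).const_mul t
  have hpb := (tendsto_cfc_fun (hp.mono Set.subset_union_right)
    (.of_forall fun n => (p n).continuous.continuousOn)).mul_const t
  refine tendsto_nhds_unique hpa (hpb.congr fun n => ?_)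
  rw [cfc_polynomial (p n) a, cfc_polynomial (p n) b]
  exact (h.aeval (p n)).eq.symm

section Contraction

variable {A : Type*} [CStarAlgebra A] [PartialOrder A] [StarOrderedRing A] {t : A}

theorem one_sub_star_mul_self_nonneg (ht : ‖t‖ ≤ 1) : 0 ≤ 1 - star t * t := by
  rw [sub_nonneg, ← CStarAlgebra.norm_le_one_iff_of_nonneg _ (star_mul_self_nonneg t),
    CStarRing.norm_star_mul_self]
  exact mul_le_one₀ ht (norm_nonneg t) ht

theorem one_sub_mul_star_self_nonneg (ht : ‖t‖ ≤ 1) : 0 ≤ 1 - t * star t := by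
  simpa using one_sub_star_mul_self_nonneg (t := star t) (by rwa [norm_star])

theorem mul_sqrt_one_sub_star_mul_self (ht : ‖t‖ ≤ 1) :
    t * CFC.sqrt (1 - star t * t) = CFC.sqrt (1 - t * star t) * t := by
  have h₁ := one_sub_star_mul_self_nonneg ht
  have h₂ := one_sub_mul_star_self_nonneg ht
  rw [CFC.sqrt_eq_real_sqrt _ h₁, CFC.sqrt_eq_real_sqrt _ h₂, cfcₙ_eq_cfc, cfcₙ_eq_cfc]
  refine SemiconjBy.cfc_real ?_ h₁.isSelfAdjoint h₂.isSelfAdjoint Real.continuous_sqrt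
  simp only [SemiconjBy, mul_sub, sub_mul, mul_one, one_mul, mul_assoc]

end Contraction

theorem tsum_eq_tsum_of_eq_of_notMem {ι α : Type*} [AddCommGroup α] [TopologicalSpace α]
    [IsTopologicalAddGroup α] [T2Space α] {f g : ι → α} (hf : Summable f) (hg : Summable g)
    (s : Finset ι) (hfg : ∀ i ∉ s, f i = g i) (hs : ∑ i ∈ s, f i = ∑ i ∈ s, g i) :
    ∑' i, f i = ∑' i, g i := by
  rw [← sub_eq_zero, ← hf.tsum_sub hg, tsum_eq_sum fun i hi => sub_eq_zero.2 (hfg i hi),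
    Finset.sum_sub_distrib, hs, sub_self]

theorem lp.surjective_of_isClosed_range {ι F G : Type*} [DecidableEq ι] {E : ι → Type*}
    [∀ i, NormedAddCommGroup (E i)] {p : ENNReal} [Fact (1 ≤ p)] (hp : p ≠ ⊤) [AddCommMonoid F]
    [FunLike G F (lp E p)] [AddMonoidHomClass G F (lp E p)] {f : G}
    (hf : IsClosed (Set.range f)) (h : ∀ i x, lp.single p i x ∈ Set.range f) :
    Function.Surjective f := by
  choose g hg using h
  refine fun y => hf.mem_of_tendsto (lp.hasSum_single hp y) (.of_forall fun s => ?_)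
  exact ⟨∑ i ∈ s, g i (y i), by simp only [map_sum, hg]⟩

section Hilbert

variable {H : Type*} [NormedAddCommGroup H] [InnerProductSpace ℂ H] [CompleteSpace H]

theorem ContinuousLinearMap.mem_unitary_of_adjoint_mul_self {u : H →L[ℂ] H}
    (hu : adjoint u * u = 1) (hsurj : Function.Surjective u) : u ∈ unitary (H →L[ℂ] H) := by
  refine Unitary.mem_iff.2 ⟨hu, ContinuousLinearMap.ext fun y => ?_⟩
  obtain ⟨x, rfl⟩ := hsurj y
  change u ((adjoint u * u) x) = u x
  rw [hu]
  rfl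

theorem inner_map_map_eq_sub_of_mul_self_eq {D S : H →L[ℂ] H} (hD : IsSelfAdjoint D)
    (h : D * D = 1 - adjoint S * S) (u v : H) : ⟪D u, D v⟫_ℂ = ⟪u, v⟫_ℂ - ⟪S u, S v⟫_ℂ := by
  rw [← ContinuousLinearMap.adjoint_inner_right, ← ContinuousLinearMap.adjoint_inner_right S,
    ← inner_sub_right, hD.adjoint_eq, ← mul_apply_eq_comp, h]
  rfl

structure IsDefectPair (T D D' : H →L[ℂ] H) : Prop where
  isSelfAdjoint : IsSelfAdjoint D
  isSelfAdjoint' : IsSelfAdjoint D'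
  mul_self : D * D = 1 - adjoint T * T
  mul_self' : D' * D' = 1 - T * adjoint T
  mul_eq_mul : T * D = D' * T

namespace IsDefectPair

variable {T D D' : H →L[ℂ] H}

theorem sqrt_of_norm_le_one (hT : ‖T‖ ≤ 1) :
    IsDefectPair T (CFC.sqrt (1 - adjoint T * T)) (CFC.sqrt (1 - T * adjoint T)) where
  isSelfAdjoint := (CFC.sqrt_nonneg _).isSelfAdjoint
  isSelfAdjoint' := (CFC.sqrt_nonneg _).isSelfAdjoint
  mul_self := CFC.sqrt_mul_sqrt_self _ (one_sub_star_mul_self_nonneg hT)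
  mul_self' := CFC.sqrt_mul_sqrt_self _ (one_sub_mul_star_self_nonneg hT)
  mul_eq_mul := mul_sqrt_one_sub_star_mul_self hT

theorem mul_adjoint_eq (hJ : IsDefectPair T D D') : D * adjoint T = adjoint T * D' := by
  rw [← ContinuousLinearMap.star_eq_adjoint]
  simpa only [star_mul, hJ.isSelfAdjoint.star_eq, hJ.isSelfAdjoint'.star_eq]
    using congrArg star hJ.mul_eq_mul

theorem inner_julia (hJ : IsDefectPair T D D') (x₀ x₁ y₀ y₁ : H) :
    ⟪D x₀ - adjoint T x₁, D y₀ - adjoint T y₁⟫_ℂ + ⟪T x₀ + D' x₁, T y₀ + D' y₁⟫_ℂ =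
      ⟪x₀, y₀⟫_ℂ + ⟪x₁, y₁⟫_ℂ := by
  have hD' : D' * D' = 1 - adjoint (adjoint T) * adjoint T := by
    rw [ContinuousLinearMap.adjoint_adjoint, hJ.mul_self']
  have cross : ∀ u v, ⟪T u, D' v⟫_ℂ = ⟪D u, adjoint T v⟫_ℂ := fun u v =>
    calc ⟪T u, D' v⟫_ℂ = ⟪D' (T u), v⟫_ℂ := (hJ.isSelfAdjoint'.isSymmetric _ _).symm
      _ = ⟪T (D u), v⟫_ℂ := by rw [← mul_apply_eq_comp, ← hJ.mul_eq_mul, mul_apply_eq_comp]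
      _ = ⟪D u, adjoint T v⟫_ℂ := (ContinuousLinearMap.adjoint_inner_right _ _ _).symm
  have cross' : ∀ u v, ⟪D' u, T v⟫_ℂ = ⟪adjoint T u, D v⟫_ℂ := fun u v => by
    rw [← inner_conj_symm, cross, inner_conj_symm]
  simp only [inner_sub_left, inner_sub_right, inner_add_left, inner_add_right,
    inner_map_map_eq_sub_of_mul_self_eq hJ.isSelfAdjoint hJ.mul_self,
    inner_map_map_eq_sub_of_mul_self_eq hJ.isSelfAdjoint' hD', cross, cross']
  ring

end IsDefectPair

def IsSchaefferMatrix (T D D' : H →L[ℂ] H)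
    (U : lp (fun _ : ℤ => H) 2 →L[ℂ] lp (fun _ : ℤ => H) 2) : Prop :=
  ∀ (x : lp (fun _ : ℤ => H) 2) (j : ℤ), (U x) j =
    if j = -1 then D (x 0) - adjoint T (x 1)
    else if j = 0 then T (x 0) + D' (x 1)
    else x (j + 1)

namespace IsSchaefferMatrix

variable {T D D' : H →L[ℂ] H} {U : lp (fun _ : ℤ => H) 2 →L[ℂ] lp (fun _ : ℤ => H) 2}

theorem inner_map_map (hU : IsSchaefferMatrix T D D' U) (hJ : IsDefectPair T D D')
    (x y : lp (fun _ : ℤ => H) 2) : ⟪U x, U y⟫_ℂ = ⟪x, y⟫_ℂ := by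
  have hshift : Summable fun j : ℤ => ⟪(U x) (j - 1), (U y) (j - 1)⟫_ℂ :=
    (Equiv.subRight (1 : ℤ)).summable_iff (f := fun j => ⟪(U x) j, (U y) j⟫_ℂ) |>.2
      (lp.summable_inner (U x) (U y))
  rw [lp.inner_eq_tsum, lp.inner_eq_tsum,
    ← (Equiv.subRight (1 : ℤ)).tsum_eq fun j => ⟪(U x) j, (U y) j⟫_ℂ]
  simp only [Equiv.subRight_apply]
  refine tsum_eq_tsum_of_eq_of_notMem hshift (lp.summable_inner x y) {0, 1}
    (fun j hj => ?_) ?_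
  · simp only [Finset.mem_insert, Finset.mem_singleton, not_or] at hj
    simp only [hU x, hU y, if_neg (show j - 1 ≠ -1 by omega), if_neg (show j - 1 ≠ 0 by omega),
      sub_add_cancel]
  · rw [Finset.sum_pair zero_ne_one, Finset.sum_pair zero_ne_one]
    convert hJ.inner_julia (x 0) (x 1) (y 0) (y 1) using 2 <;> simp [hU x, hU y]

theorem single_mem_range (hU : IsSchaefferMatrix T D D' U) (hJ : IsDefectPair T D D')
    (j : ℤ) (h : H) : lp.single 2 j h ∈ Set.range U := by
  have hTD : ∀ u, T (D u) = D' (T u) := fun u => congr($hJ.mul_eq_mul u)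
  have hDT : ∀ u, D (adjoint T u) = adjoint T (D' u) := fun u => congr($hJ.mul_adjoint_eq u)
  have hDD : ∀ u, D (D u) + adjoint T (T u) = u := fun u => by
    simpa [eq_sub_iff_add_eq] using congr($hJ.mul_self u)
  have hD'D' : ∀ u, T (adjoint T u) + D' (D' u) = u := fun u => by
    simpa [eq_sub_iff_add_eq'] using congr($hJ.mul_self' u)
  by_cases hj₁ : j = -1
  · refine ⟨lp.single 2 0 (D h) - lp.single 2 1 (T h), lp.ext (funext fun i => ?_)⟩
    rw [hU]
    split_ifs <;> simp_all [add_eq_zero_iff_eq_neg]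
  by_cases hj₀ : j = 0
  · refine ⟨lp.single 2 0 (adjoint T h) + lp.single 2 1 (D' h), lp.ext (funext fun i => ?_)⟩
    rw [hU]
    split_ifs <;> simp_all [add_eq_zero_iff_eq_neg]
  have hj₁' : (0 : ℤ) ≠ j + 1 := by omega
  have hj₀' : (1 : ℤ) ≠ j + 1 := by omega
  refine ⟨lp.single 2 (j + 1) h, lp.ext (funext fun i => ?_)⟩
  rw [hU]
  split_ifs <;> simp_all [Pi.single_apply]

theorem mem_unitary (hU : IsSchaefferMatrix T D D' U) (hJ : IsDefectPair T D D') :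
    U ∈ unitary (lp (fun _ : ℤ => H) 2 →L[ℂ] lp (fun _ : ℤ => H) 2) := by
  have hiso : adjoint U * U = 1 :=
    ContinuousLinearMap.ext fun x => ext_inner_right ℂ fun y => by
      rw [mul_apply_eq_comp, ContinuousLinearMap.adjoint_inner_left, hU.inner_map_map hJ]
      rfl
  have hclosed : IsClosed (Set.range U) :=
    ((U.isometry_iff_adjoint_comp_self).2 hiso).isClosedEmbedding.isClosed_range
  exact ContinuousLinearMap.mem_unitary_of_adjoint_mul_self hiso
    (lp.surjective_of_isClosed_range (by norm_num) hclosed (hU.single_mem_range hJ))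

theorem pow_apply_single_zero (hU : IsSchaefferMatrix T D D' U) (n : ℕ) (h : H) :
    ((U ^ n) (lp.single 2 0 h)) 0 = (T ^ n) h := by
  suffices ∀ n : ℕ, (∀ j : ℤ, 0 < j → ((U ^ n) (lp.single 2 0 h)) j = 0) ∧
      ((U ^ n) (lp.single 2 0 h)) 0 = (T ^ n) h from (this n).2
  intro n
  induction n with
  | zero => exact ⟨fun j hj => by simp [hj.ne'], by simp⟩
  | succ n ih =>
    rw [pow_succ', mul_apply_eq_comp, pow_succ', mul_apply_eq_comp]
    refine ⟨fun j hj => ?_, ?_⟩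
    · rw [hU, if_neg (by omega), if_neg (by omega)]
      exact ih.1 (j + 1) (by omega)
    · rw [hU, if_neg (by norm_num), if_pos rfl, ih.2, ih.1 1 one_pos, map_zero, add_zero]

end IsSchaefferMatrix

end Hilbert

/-- Let `T` be a contraction on `H`.  Any bounded operator `U_T` on
`ℓ²_ℤ(H)` acting block-wise by `(U_T x)_{-1} = D_T x_0 - T^* x_1`,
`(U_T x)_0 = T x_0 + D_{T^*} x_1`, `(U_T x)_j = x_{j+1}` (`j ≠ 0, -1`) — the Schäffer
matrix — is unitary, and `P_H U_T^n |_H = T^n` for all `n ≥ 0`. -/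
theorem schaeffer_dilation_unitary
    {H : Type*} [NormedAddCommGroup H] [InnerProductSpace ℂ H] [CompleteSpace H]
    (T : H →L[ℂ] H) (hT : ‖T‖ ≤ 1)
    (U : lp (fun _ : ℤ => H) 2 →L[ℂ] lp (fun _ : ℤ => H) 2)
    (hU : ∀ (x : lp (fun _ : ℤ => H) 2) (j : ℤ),
      (U x) j =
        if j = -1 then
          CFC.sqrt (1 - ContinuousLinearMap.adjoint T * T) (x 0) -
            ContinuousLinearMap.adjoint T (x 1)
        else if j = 0 then
          T (x 0) + CFC.sqrt (1 - T * ContinuousLinearMap.adjoint T) (x 1)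
        else x (j + 1)) :
    (ContinuousLinearMap.adjoint U * U = 1 ∧ U * ContinuousLinearMap.adjoint U = 1) ∧
    ∀ (n : ℕ) (h : H), ((U ^ n) (lp.single 2 0 h)) 0 = (T ^ n) h := by
  have hJ := IsDefectPair.sqrt_of_norm_le_one hT
  exact ⟨Unitary.mem_iff.1 (IsSchaefferMatrix.mem_unitary hU hJ),
    IsSchaefferMatrix.pow_apply_single_zero hU⟩
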